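/- Let K be a number field with ring of integers R, and let U be a subgroup of the unit group R^× with U ≠ {1}. For each nonzero ideal 𝔞 of R, let F_𝔞 denote the set of additive characters χ : 𝔞 → 𝕋 of the additive group of 𝔞 with values in the circle group 𝕋 satisfying χ(u·x) = χ(x) for all u ∈ U and all x ∈ 𝔞. Then F_𝔞 is finite for every nonzero ideal 𝔞 of R, and the cardinality of F_𝔞 equals the cardinality of F_R (the corresponding set of U-fixed additive characters of R itself). -/

import Mathlib

open scoped NumberField

/-!
Let `J` be the ideal generated by the `u - 1`, `u ∈ U`. Since `χ (u • x) = χ x * χ ((u - 1) • x)`,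
a character of an `R`-module `M` is `U`-invariant exactly when it is trivial on `J • M`, so the
invariant characters are the characters of the finite group `M ⧸ J • M` and there are
`|M ⧸ J • M|` of them. As `U ≠ 1`, `J ≠ 0`, and for a nonzero ideal `𝔞` multiplicativity of the
absolute norm gives `|𝔞 ⧸ J𝔞| = N(J𝔞) / N(𝔞) = N(J) = |R ⧸ J|`.
-/

def Subgroup.subOneIdeal {R : Type*} [CommRing R] (U : Subgroup Rˣ) : Ideal R :=
  Ideal.span ((fun u : Rˣ => (u : R) - 1) '' U)

lemma Subgroup.subOneIdeal_ne_bot {R : Type*} [CommRing R] {U : Subgroup Rˣ} (hU : U ≠ ⊥) :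
    U.subOneIdeal ≠ ⊥ := by
  obtain ⟨⟨u, hu⟩, hu1⟩ := U.ne_bot_iff_exists_ne_one.mp hU
  refine (Submodule.ne_bot_iff _).2 ⟨(u : R) - 1, Ideal.subset_span ⟨u, hu, rfl⟩, ?_⟩
  exact sub_ne_zero.2 fun h => hu1 (Subtype.ext (Units.ext h))

namespace AddChar

section Invariant

variable {R M A : Type*} [CommRing R] [AddCommGroup M] [Module R M] [CommGroup A]

lemma map_smul_eq_one_of_mem_span {χ : AddChar M A} {s : Set R}
    (hs : ∀ r ∈ s, ∀ x : M, χ (r • x) = 1) {r : R} (hr : r ∈ Ideal.span s) (x : M) :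
    χ (r • x) = 1 := by
  induction hr using Submodule.span_induction generalizing x with
  | mem r hr => exact hs r hr x
  | zero => rw [zero_smul, map_zero_eq_one]
  | add a b _ _ ha hb => rw [add_smul, map_add_eq_mul, ha, hb, mul_one]
  | smul a b _ hb => rw [smul_eq_mul, mul_comm, mul_smul, hb]

lemma setOf_forall_units_smul_eq (U : Subgroup Rˣ) :
    {χ : AddChar M A | ∀ u ∈ U, ∀ x : M, χ ((u : R) • x) = χ x} =
      {χ | ∀ m ∈ (U.subOneIdeal • ⊤ : Submodule R M).toAddSubgroup, χ m = 1} := by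
  have hsub (u : Rˣ) (x : M) : (u : R) • x = x + ((u : R) - 1) • x := by
    rw [sub_smul, one_smul, add_sub_cancel]
  ext χ
  constructor
  · intro hχ m hm
    refine Submodule.smul_induction_on hm (fun r hr x _ => ?_) fun a b ha hb => ?_
    · refine map_smul_eq_one_of_mem_span ?_ hr x
      rintro _ ⟨u, hu, rfl⟩ y
      simpa [hsub, map_add_eq_mul] using hχ u hu y
    · rw [map_add_eq_mul, ha, hb, mul_one]
  · intro hχ u hu x
    rw [hsub, map_add_eq_mul, hχ _ (Submodule.smul_mem_smul (Ideal.subset_span ⟨u, hu, rfl⟩)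
      Submodule.mem_top), mul_one]

end Invariant

section Quotient

variable {M : Type*} [AddCommGroup M]

lemma range_compAddMonoidHom_mk {A : Type*} [CommMonoid A] (H : AddSubgroup M) :
    Set.range (fun ψ : AddChar (M ⧸ H) A => ψ.compAddMonoidHom (QuotientAddGroup.mk' H)) =
      {χ : AddChar M A | ∀ m ∈ H, χ m = 1} := by
  ext χ
  constructor
  · rintro ⟨ψ, rfl⟩ m hm
    simp [(QuotientAddGroup.eq_zero_iff m).2 hm]
  · intro hχ
    exact ⟨toAddMonoidHomEquiv.symm (QuotientAddGroup.lift H (toAddMonoidHomEquiv χ) hχ), rfl⟩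

lemma natCard_circle (G : Type*) [AddCommGroup G] [Finite G] :
    Nat.card (AddChar G Circle) = Nat.card G := by
  cases nonempty_fintype G
  rw [Nat.card_congr circleEquivComplex.toEquiv, Nat.card_eq_fintype_card,
    Nat.card_eq_fintype_card, card_eq]

lemma finite_setOf_forall_mem_eq_one (H : AddSubgroup M) [H.FiniteIndex] :
    {χ : AddChar M Circle | ∀ m ∈ H, χ m = 1}.Finite := by
  have : Finite (AddChar (M ⧸ H) Circle) := Finite.of_equiv _ circleEquivComplex.symm.toEquiv
  rw [← range_compAddMonoidHom_mk]
  exact Set.finite_range _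

lemma ncard_setOf_forall_mem_eq_one (H : AddSubgroup M) [H.FiniteIndex] :
    {χ : AddChar M Circle | ∀ m ∈ H, χ m = 1}.ncard = H.index := by
  rw [← range_compAddMonoidHom_mk, Set.ncard_range_of_injective
    (compAddMonoidHom_injective_left _ (QuotientAddGroup.mk'_surjective H)), natCard_circle]
  rfl

end Quotient

section Count

variable {R M : Type*} [CommRing R] [AddCommGroup M] [Module R M] (U : Subgroup Rˣ)
  [(U.subOneIdeal • ⊤ : Submodule R M).toAddSubgroup.FiniteIndex]

lemma finite_setOf_forall_units_smul_eq :
    {χ : AddChar M Circle | ∀ u ∈ U, ∀ x : M, χ ((u : R) • x) = χ x}.Finite := by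
  rw [setOf_forall_units_smul_eq]
  exact finite_setOf_forall_mem_eq_one _

lemma ncard_setOf_forall_units_smul_eq :
    {χ : AddChar M Circle | ∀ u ∈ U, ∀ x : M, χ ((u : R) • x) = χ x}.ncard =
      (U.subOneIdeal • ⊤ : Submodule R M).toAddSubgroup.index := by
  rw [setOf_forall_units_smul_eq]
  exact ncard_setOf_forall_mem_eq_one _

end Count

end AddChar

lemma Ideal.smul_top_eq_comap_mul {S : Type*} [CommRing S] (I 𝔞 : Ideal S) :
    (I • ⊤ : Submodule S 𝔞) = Submodule.comap 𝔞.subtype (I * 𝔞) := by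
  rw [← Submodule.comap_map_eq_of_injective 𝔞.injective_subtype (I • ⊤), Submodule.map_smul'',
    Submodule.map_top, Submodule.range_subtype, smul_eq_mul]

lemma Ideal.index_smul_top {S : Type*} [CommRing S] [IsDedekindDomain S] [Module.Free ℤ S]
    [Module.Finite ℤ S] (I : Ideal S) {𝔞 : Ideal S} (h𝔞 : 𝔞 ≠ ⊥) :
    (I • ⊤ : Submodule S 𝔞).toAddSubgroup.index = absNorm I := by
  have hrel : (I * 𝔞).toAddSubgroup.relIndex 𝔞.toAddSubgroup * absNorm 𝔞 =
      absNorm I * absNorm 𝔞 := by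
    rw [← map_mul, absNorm_eq_index, absNorm_eq_index,
      AddSubgroup.relIndex_mul_index (Submodule.toAddSubgroup_mono mul_le_right)]
  calc (I • ⊤ : Submodule S 𝔞).toAddSubgroup.index
      = (I * 𝔞).toAddSubgroup.relIndex 𝔞.toAddSubgroup := by
        rw [smul_top_eq_comap_mul]
        rfl
    _ = absNorm I := Nat.eq_of_mul_eq_mul_right
        (Nat.pos_of_ne_zero (absNorm_eq_zero_iff.not.2 h𝔞)) hrel

/-- Let `R` be the ring of integers of a number field `K` and let `U ≠ {1}` be a subgroup of
the unit group `Rˣ`. For each nonzero ideal `𝔞` of `R`, the set `F_𝔞` of additive characters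
`χ : 𝔞 → 𝕋` fixed by every `u ∈ U` (i.e. `χ (u • x) = χ x` for all `u ∈ U`, `x ∈ 𝔞`) is
finite, and its cardinality equals that of the corresponding set `F_R` of `U`-fixed additive
characters of `R` itself. -/
theorem finite_and_card_eq_of_unitSubgroup_fixed_addChars
    (K : Type*) [Field K] [NumberField K]
    (U : Subgroup (𝓞 K)ˣ) (hU : U ≠ ⊥)
    (𝔞 : Ideal (𝓞 K)) (h𝔞 : 𝔞 ≠ 0) :
    {χ : AddChar 𝔞 Circle | ∀ u ∈ U, ∀ x : 𝔞,
        χ ⟨(u : 𝓞 K) * (x : 𝓞 K), Ideal.mul_mem_left 𝔞 (u : 𝓞 K) x.2⟩ = χ x}.Finite ∧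
    ({χ : AddChar 𝔞 Circle | ∀ u ∈ U, ∀ x : 𝔞,
        χ ⟨(u : 𝓞 K) * (x : 𝓞 K), Ideal.mul_mem_left 𝔞 (u : 𝓞 K) x.2⟩ = χ x}).ncard =
      ({χ : AddChar (𝓞 K) Circle | ∀ u ∈ U, ∀ x : 𝓞 K, χ ((u : 𝓞 K) * x) = χ x}).ncard := by
  set J := U.subOneIdeal
  have hJ : Ideal.absNorm J ≠ 0 := Ideal.absNorm_eq_zero_iff.not.2 (Subgroup.subOneIdeal_ne_bot hU)
  have h𝔞J : (J • ⊤ : Submodule (𝓞 K) 𝔞).toAddSubgroup.index = Ideal.absNorm J :=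
    J.index_smul_top h𝔞
  have hRJ : (J • ⊤ : Submodule (𝓞 K) (𝓞 K)).toAddSubgroup.index = Ideal.absNorm J := by
    rw [smul_eq_mul, Ideal.mul_top]
    rfl
  have : (J • ⊤ : Submodule (𝓞 K) 𝔞).toAddSubgroup.FiniteIndex := ⟨h𝔞J ▸ hJ⟩
  have : (J • ⊤ : Submodule (𝓞 K) (𝓞 K)).toAddSubgroup.FiniteIndex := ⟨hRJ ▸ hJ⟩
  -- The sets of the statement are those of the lemmas once `•` on `𝔞` and on `𝓞 K` is unfolded.
  exact ⟨AddChar.finite_setOf_forall_units_smul_eq U,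
    (AddChar.ncard_setOf_forall_units_smul_eq U).trans <| h𝔞J.trans <|
      hRJ.symm.trans (AddChar.ncard_setOf_forall_units_smul_eq U).symm⟩
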